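/- Let S be a finite subset of ℝ × ℝ and let (a, b) ∈ S be Pareto-optimal in S. Suppose the set S' = { s ∈ S : s.2 < b } is nonempty. Let a' be the minimum of the first coordinates of points of S', and let b' be the minimum of the second coordinates of points of the set { s ∈ S' : s.1 = a' }. Then a < a', the point (a', b') ∈ S is Pareto-optimal in S, and there is no point p that is Pareto-optimal in S with a < p.1 < a'. -/

import Mathlib

/-! Points of `S' = {s ∈ S | s.2 < b}` are exactly the candidates for the next point of the
frontier: every Pareto-optimal point to the right of `(a, b)` lies in `S'`, and every point of `S`
dominating a point of `S'` is again in `S'`. So the lexicographic minimum of `S'`, which is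
Pareto-optimal in `S'`, is Pareto-optimal in `S`, and it is the leftmost such point after `a`. -/

/-- A point `p` of `S ⊆ ℝ × ℝ` is Pareto-optimal in `S` if `p ∈ S` and no `q ∈ S`
dominates it. -/
def ParetoOptimal (S : Set (ℝ × ℝ)) (p : ℝ × ℝ) : Prop :=
  p ∈ S ∧ ¬ ∃ q ∈ S, q.1 ≤ p.1 ∧ q.2 ≤ p.2 ∧ (q.1 < p.1 ∨ q.2 < p.2)

namespace ParetoOptimal

variable {S : Set (ℝ × ℝ)} {p q : ℝ × ℝ}

theorem fst_lt_of_snd_lt (hp : ParetoOptimal S p) (hq : q ∈ S) (h : q.2 < p.2) :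
    p.1 < q.1 :=
  lt_of_not_ge fun hle => hp.2 ⟨q, hq, hle, h.le, Or.inr h⟩

theorem snd_lt_of_fst_lt (hp : ParetoOptimal S p) (hq : q ∈ S) (h : q.1 < p.1) :
    p.2 < q.2 :=
  lt_of_not_ge fun hle => hp.2 ⟨q, hq, h.le, hle, Or.inl h⟩

theorem of_sep_snd_lt {b : ℝ} (hp : ParetoOptimal {s ∈ S | s.2 < b} p) :
    ParetoOptimal S p := by
  refine ⟨hp.1.1, ?_⟩
  rintro ⟨q, hq, hq1, hq2, hlt⟩
  exact hp.2 ⟨q, ⟨hq, hq2.trans_lt hp.1.2⟩, hq1, hq2, hlt⟩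

end ParetoOptimal

theorem paretoOptimal_of_isLeast_fst_of_isLeast_snd {S : Set (ℝ × ℝ)} {a' b' : ℝ}
    (ha' : IsLeast (Prod.fst '' S) a') (hb' : IsLeast (Prod.snd '' {s ∈ S | s.1 = a'}) b') :
    ParetoOptimal S (a', b') := by
  obtain ⟨s, ⟨hs, hs1⟩, hs2⟩ := hb'.1
  have hmem : (a', b') ∈ S := by rwa [← hs1, ← hs2]
  refine ⟨hmem, ?_⟩
  rintro ⟨q, hq, hq1, hq2, hlt⟩
  have hq1_eq : q.1 = a' := le_antisymm hq1 (ha'.2 ⟨q, hq, rfl⟩)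
  have hq2_eq : q.2 = b' := le_antisymm hq2 (hb'.2 ⟨q, ⟨hq, hq1_eq⟩, rfl⟩)
  rcases hlt with h | h
  · exact h.ne hq1_eq
  · exact h.ne hq2_eq

theorem pareto_frontier_next_point_general
    (S : Finset (ℝ × ℝ)) (a b : ℝ)
    (hpar : ParetoOptimal ↑S (a, b))
    (a' b' : ℝ)
    (ha' : IsLeast (Prod.fst '' { s ∈ (↑S : Set (ℝ × ℝ)) | s.2 < b }) a')
    (hb' : IsLeast (Prod.snd '' { s ∈ (↑S : Set (ℝ × ℝ)) | s.2 < b ∧ s.1 = a' }) b') :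
    a < a' ∧ (a', b') ∈ S ∧ ParetoOptimal ↑S (a', b') ∧
      ¬ ∃ p : ℝ × ℝ, ParetoOptimal ↑S p ∧ a < p.1 ∧ p.1 < a' := by
  have hsep : {s ∈ {s ∈ (↑S : Set (ℝ × ℝ)) | s.2 < b} | s.1 = a'} =
      {s ∈ (↑S : Set (ℝ × ℝ)) | s.2 < b ∧ s.1 = a'} :=
    Set.ext fun _ => and_assoc
  have hnext_sep : ParetoOptimal {s ∈ (↑S : Set (ℝ × ℝ)) | s.2 < b} (a', b') :=
    paretoOptimal_of_isLeast_fst_of_isLeast_snd ha' (hsep ▸ hb')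
  have hnext : ParetoOptimal ↑S (a', b') := hnext_sep.of_sep_snd_lt
  refine ⟨hpar.fst_lt_of_snd_lt hnext.1 hnext_sep.1.2, Finset.mem_coe.mp hnext.1, hnext, ?_⟩
  rintro ⟨p, hp, hap, hpa'⟩
  exact hpa'.not_ge (ha'.2 ⟨p, ⟨hp.1, hp.snd_lt_of_fst_lt hpar.1 hap⟩, rfl⟩)

/-- Correctness of the inductive step of Algorithm 2: from the Pareto-optimal point
`(a, b)`, minimizing the first coordinate over `S' = {s ∈ S | s.2 < b}` and then the
second coordinate among the points of `S'` achieving that minimum yields exactly the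
next Pareto-optimal point of `S`. -/
theorem pareto_frontier_next_point
    (S : Finset (ℝ × ℝ)) (a b : ℝ)
    (hab : (a, b) ∈ S) (hpar : ParetoOptimal ↑S (a, b))
    (hne : { s ∈ (↑S : Set (ℝ × ℝ)) | s.2 < b }.Nonempty)
    (a' b' : ℝ)
    (ha' : IsLeast (Prod.fst '' { s ∈ (↑S : Set (ℝ × ℝ)) | s.2 < b }) a')
    (hb' : IsLeast (Prod.snd '' { s ∈ (↑S : Set (ℝ × ℝ)) | s.2 < b ∧ s.1 = a' }) b') :
    a < a' ∧ (a', b') ∈ S ∧ ParetoOptimal ↑S (a', b') ∧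
      ¬ ∃ p : ℝ × ℝ, ParetoOptimal ↑S p ∧ a < p.1 ∧ p.1 < a' :=
  pareto_frontier_next_point_general S a b hpar a' b' ha' hb'
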